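/- (Monotone decrease of allelic ratio) Along any polymorphic trajectory of system (F) with m₁ ≥ m₂ ≥ m₃ and μ₁ ≤ μ₂ ≤ μ₃, the ratio (u_a·x(t))/(u_A·x(t)) is nonincreasing in t; its derivative equals (m̃_a(x) − μ̃_a(x) − m̃_A(x) + μ̃_A(x))·(u_a·x)/(u_A·x) ≤ 0. -/

import Mathlib

open Matrix Filter Topology

noncomputable def uA : Fin 3 → ℝ := ![1, 1/2, 0]
noncomputable def ua : Fin 3 → ℝ := ![0, 1/2, 1]

noncomputable def Amap (y : Fin 3 → ℝ) : Fin 3 → ℝ :=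
  ![(uA ⬝ᵥ y) ^ 2 / (∑ i, y i),
    2 * (uA ⬝ᵥ y) * (ua ⬝ᵥ y) / (∑ i, y i),
    (ua ⬝ᵥ y) ^ 2 / (∑ i, y i)]

/-!
The heredity map redistributes genotypes without changing allele counts (Hardy–Weinberg):
`u_A · A(y) = u_A · y` and `u_a · A(y) = u_a · y`. Hence `d/dt (u · x) = u · Mx − u · μx` for both
allele vectors, and the logarithmic derivative of `(u_a · x) / (u_A · x)` is
`m̃_a − μ̃_a − m̃_A + μ̃_A`. The `a`-allele means average over genotypes 2 and 3, the `A`-allele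
means over genotypes 1 and 2, so the fitness ordering gives `m̃_a ≤ m₂ ≤ m̃_A` and
`μ̃_A ≤ μ₂ ≤ μ̃_a` (genotype `i` of the paper is index `i - 1` here).
-/

open Finset

lemma HasDerivAt.div_logDeriv {f g : ℝ → ℝ} {f' g' t : ℝ} (hf : HasDerivAt f f' t)
    (hg : HasDerivAt g g' t) (hft : f t ≠ 0) (hgt : g t ≠ 0) :
    HasDerivAt (fun s => f s / g s) ((f' / f t - g' / g t) * (f t / g t)) t := by
  refine (hf.fun_div hg hgt).congr_deriv ?_
  field_simp

lemma HasDerivAt.const_dotProduct {ι : Type*} [Fintype ι] {x : ℝ → ι → ℝ} {x' : ι → ℝ} {t : ℝ}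
    (u : ι → ℝ) (hx : ∀ i, HasDerivAt (fun s => x s i) (x' i) t) :
    HasDerivAt (fun s => u ⬝ᵥ x s) (u ⬝ᵥ x') t :=
  HasDerivAt.fun_sum fun i _ => (hx i).const_mul (u i)

lemma antitoneOn_Ici_of_hasDerivAt_nonpos {f f' : ℝ → ℝ} {a : ℝ}
    (hf : ∀ t, a ≤ t → HasDerivAt f (f' t) t) (hf' : ∀ t, a ≤ t → f' t ≤ 0) :
    AntitoneOn f (Set.Ici a) := by
  refine antitoneOn_of_deriv_nonpos (convex_Ici a)
    (fun t ht => (hf t ht).continuousAt.continuousWithinAt) (fun t ht => ?_) (fun t ht => ?_)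
  all_goals rw [interior_Ici] at ht
  · exact (hf t ht.le).differentiableAt.differentiableWithinAt
  · rw [(hf t ht.le).deriv]
    exact hf' t ht.le

lemma dotProduct_mul_pos {ι : Type*} [Fintype ι] {u r v : ι → ℝ} (hu : 0 ≤ u)
    (hr : ∀ i, 0 < r i) (hv : 0 ≤ v) (h : 0 < u ⬝ᵥ v) :
    0 < u ⬝ᵥ fun i => r i * v i := by
  obtain ⟨i, -, hi⟩ : ∃ i ∈ univ, 0 < u i * v i :=
    exists_lt_of_sum_lt (f := 0) (by simpa [dotProduct] using h)
  refine sum_pos' (fun j _ => mul_nonneg (hu j) (mul_nonneg (hr j).le (hv j))) ⟨i, mem_univ i, ?_⟩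
  rw [mul_left_comm]
  exact mul_pos (hr i) hi

lemma uA_dotProduct (v : Fin 3 → ℝ) : uA ⬝ᵥ v = v 0 + v 1 / 2 := by
  simp only [dotProduct, Fin.sum_univ_three, uA, cons_val_zero, cons_val_one, cons_val_two,
    head_cons, tail_cons]
  ring

lemma ua_dotProduct (v : Fin 3 → ℝ) : ua ⬝ᵥ v = v 1 / 2 + v 2 := by
  simp only [dotProduct, Fin.sum_univ_three, ua, cons_val_zero, cons_val_one, cons_val_two,
    head_cons, tail_cons]
  ring

lemma uA_nonneg : 0 ≤ uA := by
  intro i; fin_cases i <;> simp [uA]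

lemma ua_nonneg : 0 ≤ ua := by
  intro i; fin_cases i <;> simp [ua]

lemma uA_dotProduct_add_ua_dotProduct (v : Fin 3 → ℝ) : uA ⬝ᵥ v + ua ⬝ᵥ v = ∑ i, v i := by
  rw [uA_dotProduct, ua_dotProduct, Fin.sum_univ_three]
  ring

lemma uA_dotProduct_pos {v : Fin 3 → ℝ} (hv : ∀ i, 0 < v i) : 0 < uA ⬝ᵥ v := by
  rw [uA_dotProduct]
  linarith [hv 0, hv 1]

lemma ua_dotProduct_pos {v : Fin 3 → ℝ} (hv : ∀ i, 0 < v i) : 0 < ua ⬝ᵥ v := by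
  rw [ua_dotProduct]
  linarith [hv 1, hv 2]

lemma uA_dotProduct_Amap {y : Fin 3 → ℝ} (hy : ∑ i, y i ≠ 0) : uA ⬝ᵥ Amap y = uA ⬝ᵥ y := by
  rw [← uA_dotProduct_add_ua_dotProduct] at hy
  rw [uA_dotProduct, Amap]
  simp only [cons_val_zero, cons_val_one, ← uA_dotProduct_add_ua_dotProduct]
  field_simp

lemma ua_dotProduct_Amap {y : Fin 3 → ℝ} (hy : ∑ i, y i ≠ 0) : ua ⬝ᵥ Amap y = ua ⬝ᵥ y := by
  rw [← uA_dotProduct_add_ua_dotProduct] at hy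
  rw [ua_dotProduct, Amap]
  simp only [cons_val_zero, cons_val_one, cons_val_two, head_cons, tail_cons,
    ← uA_dotProduct_add_ua_dotProduct]
  field_simp

section WeightedMean

variable {r v : Fin 3 → ℝ}

lemma le_uA_weightedMean (hr : r 1 ≤ r 0) (hv : 0 ≤ v 0) (h : 0 < uA ⬝ᵥ v) :
    r 1 ≤ (uA ⬝ᵥ fun j => r j * v j) / (uA ⬝ᵥ v) := by
  rw [le_div_iff₀ h, uA_dotProduct, uA_dotProduct]
  nlinarith

lemma uA_weightedMean_le (hr : r 0 ≤ r 1) (hv : 0 ≤ v 0) (h : 0 < uA ⬝ᵥ v) :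
    (uA ⬝ᵥ fun j => r j * v j) / (uA ⬝ᵥ v) ≤ r 1 := by
  rw [div_le_iff₀ h, uA_dotProduct, uA_dotProduct]
  nlinarith

lemma le_ua_weightedMean (hr : r 1 ≤ r 2) (hv : 0 ≤ v 2) (h : 0 < ua ⬝ᵥ v) :
    r 1 ≤ (ua ⬝ᵥ fun j => r j * v j) / (ua ⬝ᵥ v) := by
  rw [le_div_iff₀ h, ua_dotProduct, ua_dotProduct]
  nlinarith

lemma ua_weightedMean_le (hr : r 2 ≤ r 1) (hv : 0 ≤ v 2) (h : 0 < ua ⬝ᵥ v) :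
    (ua ⬝ᵥ fun j => r j * v j) / (ua ⬝ᵥ v) ≤ r 1 := by
  rw [div_le_iff₀ h, ua_dotProduct, ua_dotProduct]
  nlinarith

end WeightedMean

theorem stmt_14_general
    (m : Fin 3 → ℝ → ℝ) (μ : Fin 3 → ℝ → ℝ) (w : Fin 3 → ℝ)
    (bstar : (Fin 3 → ℝ) → ℝ)
    (hm_pos : ∀ i b, 0 ≤ b → 0 < m i b)
    (hm_ord : ∀ b, 0 ≤ b → m 1 b ≤ m 0 b ∧ m 2 b ≤ m 1 b)
    (hμ_ord : ∀ z, 0 ≤ z → μ 0 z ≤ μ 1 z ∧ μ 1 z ≤ μ 2 z)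
    (hw : ∀ i, 0 < w i)
    (hb_nn : ∀ y, 0 ≤ bstar y)
    (x : ℝ → Fin 3 → ℝ)
    (hx_nn : ∀ t, 0 ≤ t → ∀ i, 0 ≤ x t i)
    (hode : ∀ t, 0 ≤ t → ∀ i,
      HasDerivAt (fun s => x s i)
        (Amap (fun j => m j (bstar (x t)) * x t j) i - μ i (w ⬝ᵥ x t) * x t i) t)
    (hA0 : 0 < uA ⬝ᵥ x 0) (ha0 : 0 < ua ⬝ᵥ x 0)
    (hpos : ∀ t, 0 < t → ∀ i, 0 < x t i) :
    (∀ t, 0 ≤ t →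
      HasDerivAt (fun s => (ua ⬝ᵥ x s) / (uA ⬝ᵥ x s))
        (((ua ⬝ᵥ fun j => m j (bstar (x t)) * x t j) / (ua ⬝ᵥ x t)
            - (ua ⬝ᵥ fun j => μ j (w ⬝ᵥ x t) * x t j) / (ua ⬝ᵥ x t)
            - (uA ⬝ᵥ fun j => m j (bstar (x t)) * x t j) / (uA ⬝ᵥ x t)
            + (uA ⬝ᵥ fun j => μ j (w ⬝ᵥ x t) * x t j) / (uA ⬝ᵥ x t))
          * ((ua ⬝ᵥ x t) / (uA ⬝ᵥ x t))) t ∧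
      ((ua ⬝ᵥ fun j => m j (bstar (x t)) * x t j) / (ua ⬝ᵥ x t)
            - (ua ⬝ᵥ fun j => μ j (w ⬝ᵥ x t) * x t j) / (ua ⬝ᵥ x t)
            - (uA ⬝ᵥ fun j => m j (bstar (x t)) * x t j) / (uA ⬝ᵥ x t)
            + (uA ⬝ᵥ fun j => μ j (w ⬝ᵥ x t) * x t j) / (uA ⬝ᵥ x t))
          * ((ua ⬝ᵥ x t) / (uA ⬝ᵥ x t)) ≤ 0) ∧
    AntitoneOn (fun t => (ua ⬝ᵥ x t) / (uA ⬝ᵥ x t)) (Set.Ici 0) := by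
  refine (fun key => ⟨key, antitoneOn_Ici_of_hasDerivAt_nonpos (fun t ht => (key t ht).1)
    (fun t ht => (key t ht).2)⟩) fun t ht => ?_
  have hxt : 0 ≤ x t := hx_nn t ht
  have hA : 0 < uA ⬝ᵥ x t := ht.eq_or_lt.elim (fun h => h ▸ hA0) (uA_dotProduct_pos <| hpos t ·)
  have ha : 0 < ua ⬝ᵥ x t := ht.eq_or_lt.elim (fun h => h ▸ ha0) (ua_dotProduct_pos <| hpos t ·)
  set y : Fin 3 → ℝ := fun j => m j (bstar (x t)) * x t j
  set z : Fin 3 → ℝ := fun j => μ j (w ⬝ᵥ x t) * x t j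
  have hmb (i : Fin 3) : 0 < m i (bstar (x t)) := hm_pos i _ (hb_nn (x t))
  have hy : ∑ i, y i ≠ 0 := by
    rw [← uA_dotProduct_add_ua_dotProduct]
    exact (add_pos (dotProduct_mul_pos uA_nonneg hmb hxt hA)
      (dotProduct_mul_pos ua_nonneg hmb hxt ha)).ne'
  have hdA := HasDerivAt.const_dotProduct uA (x' := Amap y - z) (hode t ht)
  have hda := HasDerivAt.const_dotProduct ua (x' := Amap y - z) (hode t ht)
  rw [dotProduct_sub, uA_dotProduct_Amap hy] at hdA
  rw [dotProduct_sub, ua_dotProduct_Amap hy] at hda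
  obtain ⟨hm10, hm21⟩ := hm_ord _ (hb_nn (x t))
  obtain ⟨hμ01, hμ12⟩ := hμ_ord _ (dotProduct_nonneg_of_nonneg (fun i => (hw i).le) hxt)
  refine ⟨(hda.div_logDeriv hdA ha.ne' hA.ne').congr_deriv (by ring),
    mul_nonpos_of_nonpos_of_nonneg ?_ (div_pos ha hA).le⟩
  linarith [ua_weightedMean_le (r := (m · (bstar (x t)))) hm21 (hxt 2) ha,
    le_uA_weightedMean (r := (m · (bstar (x t)))) hm10 (hxt 0) hA,
    le_ua_weightedMean (r := (μ · (w ⬝ᵥ x t))) hμ12 (hxt 2) ha,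
    uA_weightedMean_le (r := (μ · (w ⬝ᵥ x t))) hμ01 (hxt 0) hA]

/-- Monotone decrease of the allelic ratio along polymorphic trajectories of
    system (F): with fitness ordering m₁ ≥ m₂ ≥ m₃ and μ₁ ≤ μ₂ ≤ μ₃, the ratio
    (u_a·x)/(u_A·x) has derivative (m̃_a − μ̃_a − m̃_A + μ̃_A)·(u_a·x)/(u_A·x) ≤ 0
    and is nonincreasing on [0,∞). -/
theorem stmt_14
    (m : Fin 3 → ℝ → ℝ) (μ : Fin 3 → ℝ → ℝ) (w : Fin 3 → ℝ)
    (bstar : (Fin 3 → ℝ) → ℝ)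
    (hm_anti : ∀ i, AntitoneOn (m i) (Set.Ici 0))
    (hm_pos : ∀ i b, 0 ≤ b → 0 < m i b)
    (hm_ord : ∀ b, 0 ≤ b → m 1 b ≤ m 0 b ∧ m 2 b ≤ m 1 b)
    (hμ_mono : ∀ i, MonotoneOn (μ i) (Set.Ici 0))
    (hμ_nn : ∀ i z, 0 ≤ z → 0 ≤ μ i z)
    (hμ_ord : ∀ z, 0 ≤ z → μ 0 z ≤ μ 1 z ∧ μ 1 z ≤ μ 2 z)
    (hw : ∀ i, 0 < w i)
    (hb_nn : ∀ y, 0 ≤ bstar y)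
    (x : ℝ → Fin 3 → ℝ)
    (hx_nn : ∀ t, 0 ≤ t → ∀ i, 0 ≤ x t i)
    (hode : ∀ t, 0 ≤ t → ∀ i,
      HasDerivAt (fun s => x s i)
        (Amap (fun j => m j (bstar (x t)) * x t j) i - μ i (w ⬝ᵥ x t) * x t i) t)
    (hA0 : 0 < uA ⬝ᵥ x 0) (ha0 : 0 < ua ⬝ᵥ x 0)
    (hpos : ∀ t, 0 < t → ∀ i, 0 < x t i) :
    (∀ t, 0 ≤ t →
      HasDerivAt (fun s => (ua ⬝ᵥ x s) / (uA ⬝ᵥ x s))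
        (((ua ⬝ᵥ fun j => m j (bstar (x t)) * x t j) / (ua ⬝ᵥ x t)
            - (ua ⬝ᵥ fun j => μ j (w ⬝ᵥ x t) * x t j) / (ua ⬝ᵥ x t)
            - (uA ⬝ᵥ fun j => m j (bstar (x t)) * x t j) / (uA ⬝ᵥ x t)
            + (uA ⬝ᵥ fun j => μ j (w ⬝ᵥ x t) * x t j) / (uA ⬝ᵥ x t))
          * ((ua ⬝ᵥ x t) / (uA ⬝ᵥ x t))) t ∧
      ((ua ⬝ᵥ fun j => m j (bstar (x t)) * x t j) / (ua ⬝ᵥ x t)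
            - (ua ⬝ᵥ fun j => μ j (w ⬝ᵥ x t) * x t j) / (ua ⬝ᵥ x t)
            - (uA ⬝ᵥ fun j => m j (bstar (x t)) * x t j) / (uA ⬝ᵥ x t)
            + (uA ⬝ᵥ fun j => μ j (w ⬝ᵥ x t) * x t j) / (uA ⬝ᵥ x t))
          * ((ua ⬝ᵥ x t) / (uA ⬝ᵥ x t)) ≤ 0) ∧
    AntitoneOn (fun t => (ua ⬝ᵥ x t) / (uA ⬝ᵥ x t)) (Set.Ici 0) :=
  stmt_14_general m μ w bstar hm_pos hm_ord hμ_ord hw hb_nn x hx_nn hode hA0 ha0 hpos
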